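/- arXiv:1411.0285 — 2 statements merged into one kernel-verified Lean document; each statement's English description precedes it below -/
import Mathlib

section
/- Let L and M be primitive rank-2 Z_2-submodules of Z_2 ⊕ Z_2 that share a common primitive vector u (i.e., u ∈ L ∩ M is primitive). If the multiplicity of L is at least the multiplicity of M, then L ⊆ M. -/
def PrimVec (u : ℤ_[2] × ℤ_[2]) : Prop := IsUnit u.1 ∨ IsUnit u.2

/-!
A primitive vector `u` is the kernel line of the linear form `x ↦ u₁x₂ - u₂x₁`, so every submodule
containing `u` is the preimage of an ideal of `ℤ₂` under this form. Ideals of a valuation ring are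
totally ordered, hence so are the submodules containing `u`; if `M ⊆ L` were a proper inclusion,
the index of `M` would be strictly larger than that of `L`.
-/

open Submodule

variable {R : Type*} [CommRing R]

def wedge (u : R × R) : R × R →ₗ[R] R :=
  u.1 • LinearMap.snd R R R - u.2 • LinearMap.fst R R R

theorem wedge_apply (u x : R × R) : wedge u x = u.1 * x.2 - u.2 * x.1 := rfl

theorem ker_wedge_eq_span_singleton {u : R × R} {a b : R} (hab : a * u.1 + b * u.2 = 1) :
    LinearMap.ker (wedge u) = R ∙ u := by
  ext x
  rw [LinearMap.mem_ker, wedge_apply, mem_span_singleton, sub_eq_zero]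
  constructor
  · intro hx
    -- `(a x₁ + b x₂) u = x` once `u₁ x₂ = u₂ x₁` is used to rewrite each coordinate.
    refine ⟨a * x.1 + b * x.2, Prod.ext ?_ ?_⟩ <;>
      simp only [Prod.smul_fst, Prod.smul_snd, smul_eq_mul]
    · linear_combination x.1 * hab + b * hx
    · linear_combination x.2 * hab - a * hx
  · rintro ⟨c, rfl⟩
    simp only [Prod.smul_fst, Prod.smul_snd, smul_eq_mul]
    ring

theorem le_total_of_ker_le [PreValuationRing R] {M : Type*} [AddCommGroup M] [Module R M]
    (f : M →ₗ[R] R) {N₁ N₂ : Submodule R M} (h₁ : LinearMap.ker f ≤ N₁)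
    (h₂ : LinearMap.ker f ≤ N₂) : N₁ ≤ N₂ ∨ N₂ ≤ N₁ := by
  rw [← comap_map_eq_self h₁, ← comap_map_eq_self h₂]
  exact ((PreValuationRing.iff_ideal_total.mp ‹_›).total (map f N₁) (map f N₂)).imp
    (comap_mono ·) (comap_mono ·)

theorem AddSubgroup.eq_of_le_of_index_le {G : Type*} [AddGroup G] {H K : AddSubgroup G}
    (hle : H ≤ K) (hH : H.index ≠ 0) (hindex : H.index ≤ K.index) : H = K := by
  have : H.FiniteIndex := ⟨hH⟩
  by_contra hne
  exact (AddSubgroup.index_strictAnti (lt_of_le_of_ne hle hne)).not_ge hindex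

theorem PrimVec.exists_mul_add_mul_eq_one {u : ℤ_[2] × ℤ_[2]} (hu : PrimVec u) :
    ∃ a b : ℤ_[2], a * u.1 + b * u.2 = 1 := by
  rcases hu with ⟨v, hv⟩ | ⟨v, hv⟩
  · exact ⟨↑v⁻¹, 0, by simp [← hv]⟩
  · exact ⟨0, ↑v⁻¹, by simp [← hv]⟩

theorem stmt7_general (L M : Submodule ℤ_[2] (ℤ_[2] × ℤ_[2])) (u : ℤ_[2] × ℤ_[2])
    (huL : u ∈ L) (huM : u ∈ M) (hu : PrimVec u)
    (hMfin : M.toAddSubgroup.index ≠ 0)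
    (hge : M.toAddSubgroup.index ≤ L.toAddSubgroup.index) :
    L ≤ M := by
  obtain ⟨a, b, hab⟩ := hu.exists_mul_add_mul_eq_one
  have hker := ker_wedge_eq_span_singleton hab
  rcases le_total_of_ker_le (wedge u) (hker ▸ (span_singleton_le_iff_mem u L).mpr huL)
      (hker ▸ (span_singleton_le_iff_mem u M).mpr huM) with hLM | hML
  · exact hLM
  · exact (toAddSubgroup_injective
      (AddSubgroup.eq_of_le_of_index_le (toAddSubgroup_mono hML) hMfin hge)).ge

theorem stmt7 (L M : Submodule ℤ_[2] (ℤ_[2] × ℤ_[2])) (u : ℤ_[2] × ℤ_[2])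
    (huL : u ∈ L) (huM : u ∈ M) (hu : PrimVec u)
    (hLfin : L.toAddSubgroup.index ≠ 0) (hMfin : M.toAddSubgroup.index ≠ 0)
    (hge : M.toAddSubgroup.index ≤ L.toAddSubgroup.index) :
    L ≤ M :=
  stmt7_general L M u huL huM hu hMfin hge
end

section
/- Let {Γ, B} be a balanced 3-valent graph with M({Γ, B}) > 0, let C be a primitive cycle with at least one vertex of finite multiplicity, and let L(C) be the maximal lattice among the lattices of vertices of C. Then the number of vertices v of C with L(v) = L(C) is even. -/
noncomputable def pdet (u v : ℤ_[2] × ℤ_[2]) : ℤ_[2] := u.1 * v.2 - u.2 * v.1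

/-!
The cycle vectors `u i = B (c i)` are primitive and consecutive ones have even determinant, so
they all agree modulo 2. Write `u i = x i • a + y i • b` in the basis `a, b` of `L(C)` given by a
vertex attaining it; then `x i + y i ≡ 1 (mod 2)`. The lattice of vertex `i` is `L(C)` exactly when
`x i * y (i + 1) - y i * x (i + 1)` is a unit, which modulo 2 says `x i ≢ x (i + 1)`. A cyclic
sequence of bits changes value an even number of times.
-/

open Finset PadicInt

namespace PadicInt

variable {p : ℕ} [Fact p.Prime]

theorem toZMod_eq_zero_iff_not_isUnit {z : ℤ_[p]} : toZMod z = 0 ↔ ¬IsUnit z := by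
  rw [← RingHom.mem_ker, ker_toZMod, IsLocalRing.mem_maximalIdeal, mem_nonunits_iff]

theorem toZMod_eq_zero_iff_dvd {z : ℤ_[p]} : toZMod z = 0 ↔ (p : ℤ_[p]) ∣ z := by
  rw [← RingHom.mem_ker, ker_toZMod, maximalIdeal_eq_span_p, Ideal.mem_span_singleton]

end PadicInt

namespace ZMod

theorem apply_eq_of_forall_apply_add_one {α : Type*} {n : ℕ} {f : ZMod n → α}
    (h : ∀ i, f (i + 1) = f i) (i j : ZMod n) : f i = f j := by
  have shift : ∀ k : ℤ, f (j + k) = f j := by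
    intro k
    induction k using Int.induction_on with
    | zero => simp
    | succ k ih => rw [Int.cast_add, Int.cast_one, ← add_assoc, h, ih]
    | pred k ih => rw [← ih, ← h, Int.cast_sub, Int.cast_one, add_sub_assoc', sub_add_cancel]
  obtain ⟨k, hk⟩ := ZMod.intCast_surjective (i - j)
  rw [← shift k, hk, add_sub_cancel]

theorem even_card_filter_ne_add_one {n : ℕ} [NeZero n] (h : ZMod n → ZMod 2) :
    Even #{i | h i ≠ h (i + 1)} := by
  classical
  have jump : ∀ i, ((if h i ≠ h (i + 1) then 1 else 0 : ℕ) : ZMod 2) = h (i + 1) - h i := by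
    intro i
    generalize h i = a, h (i + 1) = b
    revert a b
    decide
  have telescope : ∑ i : ZMod n, h (i + 1) = ∑ i, h i :=
    Fintype.sum_equiv (Equiv.addRight 1) _ _ fun _ => rfl
  rw [even_iff_two_dvd, ← ZMod.natCast_eq_zero_iff, card_filter, Nat.cast_sum,
    sum_congr rfl fun i _ => jump i, sum_sub_distrib, telescope, sub_self]

theorem prod_eq_of_det_eq_zero :
    ∀ u v : ZMod 2 × ZMod 2, u ≠ 0 → v ≠ 0 → u.1 * v.2 - u.2 * v.1 = 0 → u = v := by
  decide

theorem eq_one_of_smul_eq_self :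
    ∀ (t : ZMod 2) (u : ZMod 2 × ZMod 2), u ≠ 0 → t • u = u → t = 1 := by
  decide

end ZMod

namespace Submodule

variable {R M : Type*} [CommRing R] [AddCommGroup M] [Module R M]

theorem span_pair_neg_right (a b : M) : span R {a, -b} = span R {a, b} := by
  rw [span_insert, span_insert, ← Set.neg_singleton, span_neg]

theorem span_pair_smul_add_smul_eq_iff {a b : M} (hab : LinearIndependent R ![a, b])
    (x y x' y' : R) :
    span R {x • a + y • b, x' • a + y' • b} = span R {a, b} ↔ IsUnit (x * y' - y * x') := by
  set u := x • a + y • b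
  set w := x' • a + y' • b
  have hle : span R {u, w} ≤ span R {a, b} := by
    rw [span_le, Set.insert_subset_iff, Set.singleton_subset_iff]
    exact ⟨mem_span_pair.2 ⟨x, y, rfl⟩, mem_span_pair.2 ⟨x', y', rfl⟩⟩
  constructor
  · intro heq
    obtain ⟨p, q, hpq⟩ := mem_span_pair.1 (heq ▸ subset_span (by simp) : a ∈ span R {u, w})
    obtain ⟨r, s, hrs⟩ := mem_span_pair.1 (heq ▸ subset_span (by simp) : b ∈ span R {u, w})
    obtain ⟨h₁, h₂⟩ := LinearIndependent.pair_iff.1 hab (p * x + q * x' - 1) (p * y + q * y')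
      (by linear_combination (norm := module) hpq)
    obtain ⟨h₃, h₄⟩ := LinearIndependent.pair_iff.1 hab (r * x + s * x') (r * y + s * y' - 1)
      (by linear_combination (norm := module) hrs)
    -- the coefficient matrices of (a, b) and (u, w) are mutually inverse
    exact .of_mul_eq_one (p * s - q * r) <| by
      linear_combination (r * y + s * y') * h₁ - (p * y + q * y') * h₃ + h₄
  · intro hδ
    obtain ⟨v, hv⟩ := hδ.exists_left_inv
    refine le_antisymm hle (span_le.2 ?_)
    rw [Set.insert_subset_iff, Set.singleton_subset_iff]
    exact ⟨mem_span_pair.2 ⟨v * y', -(v * y), by linear_combination (norm := module) hv • a⟩,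
      mem_span_pair.2 ⟨-(v * x'), v * x, by linear_combination (norm := module) hv • b⟩⟩

end Submodule

theorem pdet_neg_right (u v : ℤ_[2] × ℤ_[2]) : pdet u (-v) = -pdet u v := by
  simp only [pdet, Prod.fst_neg, Prod.snd_neg]
  ring

theorem pdet_smul_add_smul (a b : ℤ_[2] × ℤ_[2]) (x y x' y' : ℤ_[2]) :
    pdet (x • a + y • b) (x' • a + y' • b) = (x * y' - y * x') * pdet a b := by
  simp only [pdet, Prod.fst_add, Prod.snd_add, Prod.smul_fst, Prod.smul_snd, smul_eq_mul]
  ring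

theorem linearIndependent_pair_of_pdet_ne_zero {a b : ℤ_[2] × ℤ_[2]} (h : pdet a b ≠ 0) :
    LinearIndependent ℤ_[2] ![a, b] := by
  refine LinearIndependent.pair_iff.2 fun s t hst => ?_
  have h₁ : s * a.1 + t * b.1 = 0 := by simpa using congrArg Prod.fst hst
  have h₂ : s * a.2 + t * b.2 = 0 := by simpa using congrArg Prod.snd hst
  have hs : s * pdet a b = 0 := by unfold pdet; linear_combination b.2 * h₁ - b.1 * h₂
  have ht : t * pdet a b = 0 := by unfold pdet; linear_combination a.1 * h₂ - a.2 * h₁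
  exact ⟨(mul_eq_zero.1 hs).resolve_right h, (mul_eq_zero.1 ht).resolve_right h⟩

noncomputable def reduceModTwo (u : ℤ_[2] × ℤ_[2]) : ZMod 2 × ZMod 2 := Prod.map toZMod toZMod u

theorem reduceModTwo_smul_add_smul (a b : ℤ_[2] × ℤ_[2]) (x y : ℤ_[2]) :
    reduceModTwo (x • a + y • b) = toZMod x • reduceModTwo a + toZMod y • reduceModTwo b := by
  ext <;> simp [reduceModTwo]

theorem reduceModTwo_ne_zero_iff {u : ℤ_[2] × ℤ_[2]} : reduceModTwo u ≠ 0 ↔ PrimVec u := by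
  simp only [reduceModTwo, PrimVec, ne_eq, Prod.ext_iff, Prod.map_fst, Prod.map_snd,
    Prod.fst_zero, Prod.snd_zero, toZMod_eq_zero_iff_not_isUnit, not_and_or, not_not]

theorem reduceModTwo_eq_of_two_dvd_pdet {u v : ℤ_[2] × ℤ_[2]} (hu : PrimVec u) (hv : PrimVec v)
    (h : 2 ∣ pdet u v) : reduceModTwo u = reduceModTwo v := by
  refine ZMod.prod_eq_of_det_eq_zero _ _ (reduceModTwo_ne_zero_iff.2 hu)
    (reduceModTwo_ne_zero_iff.2 hv) ?_
  have : toZMod (pdet u v) = 0 := toZMod_eq_zero_iff_dvd.2 (by exact_mod_cast h)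
  simpa [pdet, reduceModTwo] using this

theorem toZMod_add_toZMod_eq_one {a b : ℤ_[2] × ℤ_[2]} (ha : PrimVec a)
    (hab : reduceModTwo a = reduceModTwo b) {x y : ℤ_[2]}
    (h : reduceModTwo (x • a + y • b) = reduceModTwo a) : toZMod x + toZMod y = 1 := by
  rw [reduceModTwo_smul_add_smul, ← hab, ← add_smul] at h
  exact ZMod.eq_one_of_smul_eq_self _ _ (reduceModTwo_ne_zero_iff.2 ha) h

theorem isUnit_det_iff_toZMod_ne {a b : ℤ_[2] × ℤ_[2]} (ha : PrimVec a)
    (hab : reduceModTwo a = reduceModTwo b) {x y x' y' : ℤ_[2]}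
    (h : reduceModTwo (x • a + y • b) = reduceModTwo a)
    (h' : reduceModTwo (x' • a + y' • b) = reduceModTwo a) :
    IsUnit (x * y' - y * x') ↔ toZMod x ≠ toZMod x' := by
  have hy := eq_sub_of_add_eq' (toZMod_add_toZMod_eq_one ha hab h)
  have hy' := eq_sub_of_add_eq' (toZMod_add_toZMod_eq_one ha hab h')
  rw [← not_iff_not, not_not, ← toZMod_eq_zero_iff_not_isUnit, map_sub, map_mul, map_mul, hy, hy',
    ← sub_eq_zero (a := toZMod x)]
  ring_nf

open Finset in
open scoped Classical in
theorem stmt14_general {V E : Type}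
    (rev : E → E) (head : E → V) (B : E → ℤ_[2] × ℤ_[2])
    (hBrev : ∀ e, B (rev e) = - B e)
    (m : V → ℕ∞)
    (hm : ∀ (v : V) (e1 e2 : E), e1 ≠ e2 → head e1 = v → head e2 = v →
      m v = emultiplicity (2 : ℤ_[2]) (pdet (B e1) (B e2)))
    (L : V → Submodule ℤ_[2] (ℤ_[2] × ℤ_[2]))
    (hL : ∀ (v : V) (e1 e2 : E), e1 ≠ e2 → head e1 = v → head e2 = v →
      L v = Submodule.span ℤ_[2] {B e1, B e2})
    (hpos : ∀ v : V, m v ≠ 0)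
    (n : ℕ) [NeZero n] (c : ZMod n → E)
    (hcyc : ∀ i : ZMod n, head (rev (c (i + 1))) = head (c i))
    (hcnr : ∀ i j : ZMod n, c i ≠ rev (c j))
    (hcprim : ∀ i : ZMod n, PrimVec (B (c i)))
    (hfin : ∃ i : ZMod n, m (head (c i)) ≠ ⊤)
    (LC : Submodule ℤ_[2] (ℤ_[2] × ℤ_[2]))
    (hLCmem : ∃ i : ZMod n, L (head (c i)) = LC)
    (hLCmax : ∀ i : ZMod n, L (head (c i)) ≤ LC) :
    Even ((Finset.univ.filter fun i : ZMod n => L (head (c i)) = LC).card) := by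
  set u : ZMod n → ℤ_[2] × ℤ_[2] := fun i => B (c i)
  have hLu : ∀ i, L (head (c i)) = Submodule.span ℤ_[2] {u i, u (i + 1)} := fun i => by
    rw [hL _ _ _ (hcnr i (i + 1)) rfl (hcyc i), hBrev, Submodule.span_pair_neg_right]
  have hmu : ∀ i, m (head (c i)) = emultiplicity 2 (pdet (u i) (u (i + 1))) := fun i => by
    rw [hm _ _ _ (hcnr i (i + 1)) rfl (hcyc i), hBrev, pdet_neg_right, emultiplicity_neg]
  have hred : ∀ i j, reduceModTwo (u i) = reduceModTwo (u j) :=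
    ZMod.apply_eq_of_forall_apply_add_one fun i =>
      (reduceModTwo_eq_of_two_dvd_pdet (hcprim i) (hcprim (i + 1))
        (not_not.1 <| emultiplicity_eq_zero.not.1 (hmu i ▸ hpos _))).symm
  obtain ⟨k, hk⟩ := hLCmem
  have hLC : LC = Submodule.span ℤ_[2] {u k, u (k + 1)} := hk ▸ hLu k
  choose x y hxy using fun i => Submodule.mem_span_pair.1 <|
    hLC ▸ hLCmax i (hLu i ▸ Submodule.subset_span (Set.mem_insert (u i) _))
  have hdet : pdet (u k) (u (k + 1)) ≠ 0 := fun h0 => by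
    obtain ⟨i, hi⟩ := hfin
    rw [hmu, ← hxy i, ← hxy (i + 1), pdet_smul_add_smul, h0, mul_zero, emultiplicity_zero] at hi
    exact hi rfl
  have hchange : ∀ i, L (head (c i)) = LC ↔ toZMod (x i) ≠ toZMod (x (i + 1)) := fun i => by
    rw [hLu, hLC, ← hxy i, ← hxy (i + 1), Submodule.span_pair_smul_add_smul_eq_iff
      (linearIndependent_pair_of_pdet_ne_zero hdet)]
    exact isUnit_det_iff_toZMod_ne (hcprim k) (hred k (k + 1))
      (by rw [hxy]; exact hred _ _) (by rw [hxy]; exact hred _ _)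
  simp_rw [hchange]
  convert ZMod.even_card_filter_ne_add_one fun i => toZMod (x i)

open Finset in
open scoped Classical in
theorem stmt14 {V E : Type} [Fintype V] [Fintype E] [DecidableEq V] [DecidableEq E]
    (rev : E → E) (head : E → V) (B : E → ℤ_[2] × ℤ_[2])
    (hrev : ∀ e, rev (rev e) = e) (hrevne : ∀ e, rev e ≠ e)
    (hcubic : ∀ v : V, (Finset.univ.filter fun e => head e = v).card = 3)
    (hBrev : ∀ e, B (rev e) = - B e)
    (hBsum : ∀ v : V, ∑ e ∈ Finset.univ.filter (fun e => head e = v), B e = 0)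
    (m : V → ℕ∞)
    (hm : ∀ (v : V) (e1 e2 : E), e1 ≠ e2 → head e1 = v → head e2 = v →
      m v = emultiplicity (2 : ℤ_[2]) (pdet (B e1) (B e2)))
    (L : V → Submodule ℤ_[2] (ℤ_[2] × ℤ_[2]))
    (hL : ∀ (v : V) (e1 e2 : E), e1 ≠ e2 → head e1 = v → head e2 = v →
      L v = Submodule.span ℤ_[2] {B e1, B e2})
    (hpos : ∀ v : V, m v ≠ 0)
    (n : ℕ) [NeZero n] (c : ZMod n → E)
    (hcyc : ∀ i : ZMod n, head (rev (c (i + 1))) = head (c i))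
    (hcinj : ∀ i j : ZMod n, c i = c j → i = j)
    (hcnr : ∀ i j : ZMod n, c i ≠ rev (c j))
    (hcprim : ∀ i : ZMod n, PrimVec (B (c i)))
    (hfin : ∃ i : ZMod n, m (head (c i)) ≠ ⊤)
    (LC : Submodule ℤ_[2] (ℤ_[2] × ℤ_[2]))
    (hLCmem : ∃ i : ZMod n, L (head (c i)) = LC)
    (hLCmax : ∀ i : ZMod n, L (head (c i)) ≤ LC) :
    Even ((Finset.univ.filter fun i : ZMod n => L (head (c i)) = LC).card) :=
  stmt14_general rev head B hBrev m hm L hL hpos n c hcyc hcnr hcprim hfin LC hLCmem hLCmax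
end
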